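/- Soundness of solution-based pruning (SolutionCheck for MO-PAMO): let π be a path from a valid start state s_o to a state s = (v, p), let v_g ∉ V_so be the goal cell, and suppose c* ∈ ℕ × ℕ is the cost vector of some solution path (from s_o to a state with robot at v_g). If c* dominates g(π) + (d*(v), 0), then for every path σ from s to a state with robot cell v_g, c* dominates g(π·σ); hence no extension of π yields a cost vector in the Pareto-optimal front of the set of all solution-path cost vectors. -/

import Mathlib

/-- A cell in the occupancy grid. -/
abbrev Cell : Type := ℤ × ℤ

/-- Two cells are adjacent when their difference is a unit vector (L1-distance 1). -/
def Adjacent (a b : Cell) : Prop :=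
  (a.1 - b.1).natAbs + (a.2 - b.2).natAbs = 1

/-- A search state: the robot cell together with the cells of the `m` objects. -/
structure PState (m : ℕ) where
  robot : Cell
  objs : Fin m → Cell

/-- A state is valid: robot avoids static obstacles and objects, objects are
pairwise distinct and avoid static obstacles. -/
def Valid (Vso : Finset Cell) {m : ℕ} (s : PState m) : Prop :=
  s.robot ∉ Vso ∧ s.robot ∉ Set.range s.objs ∧
    Function.Injective s.objs ∧ ∀ k, s.objs k ∉ Vso

/-- A transition of the grid PAMO model, labelled by its cost vector:
a move costs `(1,0)`, a push costs `(1,1)`. -/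
inductive PTrans (Vso : Finset Cell) {m : ℕ} :
    PState m → PState m → ℕ × ℕ → Prop
  | move (v v' : Cell) (p : Fin m → Cell)
      (hadj : Adjacent v v') (hso : v' ∉ Vso) (hmo : v' ∉ Set.range p) :
      PTrans Vso ⟨v, p⟩ ⟨v', p⟩ (1, 0)
  | push (v v' : Cell) (p : Fin m → Cell) (k : Fin m)
      (hadj : Adjacent v v') (hk : v' = p k)
      (hso : v' + (v' - v) ∉ Vso) (hmo : v' + (v' - v) ∉ Set.range p) :
      PTrans Vso ⟨v, p⟩ ⟨v', Function.update p k (v' + (v' - v))⟩ (1, 1)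

/-- A path: a finite sequence of states where each consecutive pair is related
by a transition. -/
inductive PPath (Vso : Finset Cell) {m : ℕ} : PState m → PState m → Type
  | nil (s : PState m) : PPath Vso s s
  | cons {s s' t : PState m} {c : ℕ × ℕ}
      (h : PTrans Vso s s' c) (rest : PPath Vso s' t) : PPath Vso s t

/-- Cost vector of a path: the sum of its transition cost vectors. -/
def PPath.cost {Vso : Finset Cell} {m : ℕ} :
    {s t : PState m} → PPath Vso s t → ℕ × ℕ
  | _, _, .nil _ => (0, 0)
  | _, _, .cons (c := c) _ rest => c + rest.cost

/-- The list of states visited by a path, in order. -/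
def PPath.support {Vso : Finset Cell} {m : ℕ} :
    {s t : PState m} → PPath Vso s t → List (PState m)
  | s, _, .nil _ => [s]
  | s, _, .cons _ rest => s :: rest.support

/-- Concatenation of paths. -/
def PPath.append {Vso : Finset Cell} {m : ℕ} :
    {s t u : PState m} → PPath Vso s t → PPath Vso t u → PPath Vso s u
  | _, _, _, .nil _, σ => σ
  | _, _, _, .cons h rest, σ => .cons h (rest.append σ)

/-- `a` dominates `b` when `a ≤ b` componentwise and `a ≠ b`. -/
def Dominates {α : Type*} [Preorder α] (a b : α) : Prop := a ≤ b ∧ a ≠ b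

/-- The Pareto-optimal front of `B`: elements of `B` not dominated by any element of `B`. -/
def ParetoFront (B : Set (ℕ × ℕ)) : Set (ℕ × ℕ) :=
  {b ∈ B | ∀ a ∈ B, ¬ Dominates a b}

/-- The grid graph on cells avoiding the static obstacles. -/
def GridGraph (Vso : Finset Cell) : SimpleGraph {v : Cell // v ∉ Vso} where
  Adj a b := Adjacent a.1 b.1
  symm := by
    refine ⟨fun a b h => ?_⟩
    simp only [Adjacent] at h ⊢
    omega
  loopless := by
    refine ⟨fun a h => ?_⟩
    simp [Adjacent] at h

/-- `dstar Vso vg v`: graph distance (in `ℕ∞`) from `v` to `vg` in the grid graph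
avoiding static obstacles; `⊤` if unreachable (or undefined). -/
noncomputable def dstar (Vso : Finset Cell) (vg : Cell) (v : Cell) : ℕ∞ :=
  if h : v ∉ Vso ∧ vg ∉ Vso then (GridGraph Vso).edist ⟨v, h.1⟩ ⟨vg, h.2⟩ else ⊤

/-! Every transition moves the robot to an adjacent obstacle-free cell at time cost 1, so any
continuation `σ` of `π` to the goal takes at least `d*(v)` time and has a nonnegative push count:
`g(π·σ) ≥ g(π) + (d*(v), 0)` componentwise. As `c*` lies strictly below the right-hand side, it
dominates `g(π·σ)`, which therefore is not Pareto-optimal among the solution costs. -/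

lemma dominates_iff_lt {α : Type*} [PartialOrder α] {a b : α} : Dominates a b ↔ a < b :=
  lt_iff_le_and_ne.symm

lemma notMem_paretoFront_of_dominates {B : Set (ℕ × ℕ)} {a b : ℕ × ℕ} (ha : a ∈ B)
    (h : Dominates a b) : b ∉ ParetoFront B :=
  fun hb => hb.2 a ha h

lemma natCast_pair_lt_natCast_pair_iff {a b : ℕ × ℕ} :
    (((a.1 : ℕ∞), (a.2 : ℕ∞)) < ((b.1 : ℕ∞), (b.2 : ℕ∞))) ↔ a < b := by
  simp only [Prod.lt_iff, Nat.cast_lt, Nat.cast_le]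

/-- The part of `Valid` that keeps every robot cell of a path inside `GridGraph Vso`. -/
def ObstacleFree (Vso : Finset Cell) {m : ℕ} (s : PState m) : Prop :=
  s.robot ∉ Vso ∧ ∀ k, s.objs k ∉ Vso

section Grid

variable {Vso : Finset Cell} {m : ℕ}

lemma Valid.obstacleFree {s : PState m} (h : Valid Vso s) : ObstacleFree Vso s :=
  ⟨h.1, h.2.2.2⟩

lemma PTrans.adjacent {s s' : PState m} {c : ℕ × ℕ} (h : PTrans Vso s s' c) :
    Adjacent s.robot s'.robot := by
  cases h <;> assumption

lemma PTrans.cost_fst {s s' : PState m} {c : ℕ × ℕ} (h : PTrans Vso s s' c) : c.1 = 1 := by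
  cases h <;> rfl

lemma PTrans.obstacleFree {s s' : PState m} {c : ℕ × ℕ} (h : PTrans Vso s s' c)
    (hs : ObstacleFree Vso s) : ObstacleFree Vso s' := by
  cases h with
  | move _ _ _ _ hso _ => exact ⟨hso, hs.2⟩
  | push _ _ _ k _ hk hso _ =>
    refine ⟨hk ▸ hs.2 k, fun j => ?_⟩
    rcases eq_or_ne j k with rfl | hjk
    · simpa using hso
    · simpa [Function.update_of_ne hjk] using hs.2 j

lemma PPath.obstacleFree {s t : PState m} (σ : PPath Vso s t) (hs : ObstacleFree Vso s) :
    ObstacleFree Vso t := by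
  induction σ with
  | nil => exact hs
  | cons h _ ih => exact ih (h.obstacleFree hs)

lemma PPath.cost_append {s t u : PState m} (π : PPath Vso s t) (σ : PPath Vso t u) :
    (π.append σ).cost = π.cost + σ.cost := by
  induction π with
  | nil => simp [PPath.append, PPath.cost]
  | cons _ _ ih => simp [PPath.append, PPath.cost, ih, add_assoc]

lemma dstar_self {v : Cell} (hv : v ∉ Vso) : dstar Vso v v = 0 := by
  simp [dstar, hv]

lemma dstar_le_one_add {vg v v' : Cell} (hv : v ∉ Vso) (hv' : v' ∉ Vso) (hadj : Adjacent v v') :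
    dstar Vso vg v ≤ 1 + dstar Vso vg v' := by
  by_cases hg : vg ∈ Vso
  · simp [dstar, hg]
  rw [dstar, dif_pos ⟨hv, hg⟩, dstar, dif_pos ⟨hv', hg⟩]
  have hstep : (GridGraph Vso).edist ⟨v, hv⟩ ⟨v', hv'⟩ ≤ 1 :=
    SimpleGraph.edist_le_one_iff_adj_or_eq.mpr (Or.inl hadj)
  exact SimpleGraph.edist_triangle.trans (add_le_add_left hstep _)

lemma PPath.dstar_le_cost_fst {s t : PState m} (σ : PPath Vso s t) (hs : ObstacleFree Vso s) :
    dstar Vso t.robot s.robot ≤ σ.cost.1 := by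
  induction σ with
  | nil => simp [dstar_self hs.1]
  | cons h rest ih =>
    have hs' := h.obstacleFree hs
    calc _ ≤ 1 + dstar Vso _ _ := dstar_le_one_add hs.1 hs'.1 h.adjacent
      _ ≤ 1 + (rest.cost.1 : ℕ∞) := by gcongr; exact ih hs'
      _ = _ := by simp [PPath.cost, h.cost_fst]

end Grid

theorem solutionCheck_sound_general (Vso : Finset Cell) (m : ℕ)
    (so s : PState m) (hso : Valid Vso so) (vg : Cell)
    (π : PPath Vso so s) (cstar : ℕ × ℕ)
    (hsol : ∃ t : PState m, ∃ τ : PPath Vso so t, t.robot = vg ∧ τ.cost = cstar)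
    (hdom : Dominates ((cstar.1 : ℕ∞), (cstar.2 : ℕ∞))
      (((π.cost).1 : ℕ∞) + dstar Vso vg s.robot, ((π.cost).2 : ℕ∞))) :
    ∀ (t : PState m) (σ : PPath Vso s t), t.robot = vg →
      Dominates cstar (π.append σ).cost ∧
      (π.append σ).cost ∉ ParetoFront
        {c : ℕ × ℕ | ∃ t' : PState m, ∃ τ : PPath Vso so t',
          t'.robot = vg ∧ τ.cost = c} := by
  rintro t σ rfl
  have hd := σ.dstar_le_cost_fst (π.obstacleFree hso.obstacleFree)
  have hdom' : Dominates cstar (π.append σ).cost := by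
    rw [dominates_iff_lt] at hdom ⊢
    rw [← natCast_pair_lt_natCast_pair_iff]
    refine hdom.trans_le ⟨?_, ?_⟩ <;>
      simp only [PPath.cost_append, Prod.fst_add, Prod.snd_add, Nat.cast_add]
    · gcongr
    · exact le_self_add
  exact ⟨hdom', notMem_paretoFront_of_dominates hsol hdom'⟩

/-- soundness of solution-based pruning (SolutionCheck for
MO-PAMO). If the cost vector `cstar` of some already-found solution path
dominates `g(π) + (d*(v), 0)` (computed in `ℕ∞ × ℕ∞`), then `cstar` dominates
the cost of every solution extension of `π`, so no extension of `π` yields a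
cost vector in the Pareto-optimal front of the set of all solution costs. -/
theorem solutionCheck_sound (Vso : Finset Cell) (m : ℕ)
    (so s : PState m) (hso : Valid Vso so) (vg : Cell) (hg : vg ∉ Vso)
    (π : PPath Vso so s) (cstar : ℕ × ℕ)
    (hsol : ∃ t : PState m, ∃ τ : PPath Vso so t, t.robot = vg ∧ τ.cost = cstar)
    (hdom : Dominates ((cstar.1 : ℕ∞), (cstar.2 : ℕ∞))
      (((π.cost).1 : ℕ∞) + dstar Vso vg s.robot, ((π.cost).2 : ℕ∞))) :
    ∀ (t : PState m) (σ : PPath Vso s t), t.robot = vg →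
      Dominates cstar (π.append σ).cost ∧
      (π.append σ).cost ∉ ParetoFront
        {c : ℕ × ℕ | ∃ t' : PState m, ∃ τ : PPath Vso so t',
          t'.robot = vg ∧ τ.cost = c} :=
  solutionCheck_sound_general Vso m so s hso vg π cstar hsol hdom
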